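/- The transformations (M,γ) ↦ (α(γ)M' + cM'' + M''×h(γ), γ), where M'' = (M·γ)γ and M' = M − M'', form a group under composition: composing the transformations with parameters (α₁,c₁,h₁) and then (α₂,c₂,h₂) yields the transformation with parameters (α₁α₂, c₁c₂, α₂h₁ + c₁h₂). -/

import Mathlib

/-!
The tangential part `α M'` and the term `M'' × h` are orthogonal to `γ`, so each transformation
maps the normal component `M''` to `c M''`. Substituting this into the second transformation,
everything is linear in `M` (the cross product is bilinear), and collecting the `M'`, `M''` and
`M'' × ·` terms gives the stated parameters.
-/

open Matrix

/-- The transformation M ↦ α(γ)M' + cM'' + M''×h(γ), where M'' = (M·γ)γ is the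
component of M along γ and M' = M − M'' the tangential component. -/
noncomputable def T (α : (Fin 3 → ℝ) → ℝ) (c : ℝ) (h : (Fin 3 → ℝ) → (Fin 3 → ℝ))
    (γ M : Fin 3 → ℝ) : Fin 3 → ℝ :=
  α γ • (M - (M ⬝ᵥ γ) • γ) + c • ((M ⬝ᵥ γ) • γ)
    + crossProduct ((M ⬝ᵥ γ) • γ) (h γ)

theorem T_dotProduct_of_dotProduct_self_eq_one (α : (Fin 3 → ℝ) → ℝ) (c : ℝ)
    (h : (Fin 3 → ℝ) → (Fin 3 → ℝ)) {γ : Fin 3 → ℝ} (hγ : γ ⬝ᵥ γ = 1) (M : Fin 3 → ℝ) :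
    T α c h γ M ⬝ᵥ γ = c * (M ⬝ᵥ γ) := by
  rw [dotProduct_comm]
  simp only [T, dotProduct_add, dotProduct_sub, dotProduct_smul, LinearMap.map_smul₂,
    dot_self_cross, dotProduct_comm M γ, hγ, smul_eq_mul]
  ring

theorem statement11_general
    (α₁ α₂ : (Fin 3 → ℝ) → ℝ) (c₁ c₂ : ℝ)
    (h₁ h₂ : (Fin 3 → ℝ) → (Fin 3 → ℝ)) :
    ∀ γ : Fin 3 → ℝ, γ ⬝ᵥ γ = 1 → ∀ M : Fin 3 → ℝ,
      T α₂ c₂ h₂ γ (T α₁ c₁ h₁ γ M)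
        = T (fun γ => α₁ γ * α₂ γ) (c₁ * c₂)
            (fun γ => α₂ γ • h₁ γ + c₁ • h₂ γ) γ M := by
  intro γ hγ M
  conv_lhs => rw [T, T_dotProduct_of_dotProduct_self_eq_one α₁ c₁ h₁ hγ]
  simp only [T, map_add, map_smul, LinearMap.smul_apply]
  module

/-- the transformations (M,γ) ↦ (α(γ)M' + cM'' + M''×h(γ), γ) form a
group under composition: composing the transformations with parameters (α₁,c₁,h₁) and
then (α₂,c₂,h₂) yields the transformation with parameters (α₁α₂, c₁c₂, α₂h₁ + c₁h₂). -/
theorem statement11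
    (α₁ α₂ : (Fin 3 → ℝ) → ℝ) (c₁ c₂ : ℝ)
    (h₁ h₂ : (Fin 3 → ℝ) → (Fin 3 → ℝ))
    (hα₁ : ∀ γ, 0 < α₁ γ) (hα₂ : ∀ γ, 0 < α₂ γ)
    (hc₁ : c₁ ≠ 0) (hc₂ : c₂ ≠ 0) :
    ∀ γ : Fin 3 → ℝ, γ ⬝ᵥ γ = 1 → ∀ M : Fin 3 → ℝ,
      T α₂ c₂ h₂ γ (T α₁ c₁ h₁ γ M)
        = T (fun γ => α₁ γ * α₂ γ) (c₁ * c₂)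
            (fun γ => α₂ γ • h₁ γ + c₁ • h₂ γ) γ M :=
  statement11_general α₁ α₂ c₁ c₂ h₁ h₂
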